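/- Let A ⊆ {1,…,N} be nonempty. Define 𝒞 to be the set of pairs (C, C') of finite subsets of ℤ such that r(C) ≤ (N+1)/2, r(C') ≤ (N+1)/2, and there exists a ∈ A with C △ C' properly contained in s_a(A) and s_a(A) ⊆ C ∪ C'. Define 𝒞_N to be the set of pairs (B, B') of subsets of {1,…,N} such that r_N(B) ≤ (N+1)/2, r_N(B') ≤ (N+1)/2, and B △ B' is properly contained in A with A ⊆ B ∪ B'. Then the map (C, C') ↦ (π(C), π(C')) is a bijection from 𝒞 onto 𝒞_N. (Step 2 of the proof of the locality theorem in the Supplemental Material.) -/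

import Mathlib

/-- `projN N i` is the unique element of `{1, …, N}` congruent to `i` mod `N`. -/
def projN (N i : ℤ) : ℤ := (i - 1) % N + 1

/-- The cut `s_n` of the chain: `s_n i = i` if `i ≥ n`, and `i + N` if `i < n`. -/
def cutN (N n i : ℤ) : ℤ := if n ≤ i then i else i + N

/-- The range `r(A) = max A - min A + 1` of a finite nonempty set, with `r(∅) = 0`. -/
def rng (A : Finset ℤ) : ℤ := if h : A.Nonempty then A.max' h - A.min' h + 1 else 0

/-- `r_N(A) = min over n ∈ {1,…,N} of r(s_n(A))`. -/
noncomputable def rN (N : ℤ) (A : Finset ℤ) : ℤ :=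
  sInf ((fun n => rng (A.image (cutN N n))) '' Set.Icc 1 N)

/-!
The projection `π` is injective on `C ∪ C'` whenever `r(C), r(C') ≤ (N+1)/2` and `C ∩ C' ≠ ∅`,
since then all of `C ∪ C'` lies within `(N-1)/2` of a common point. Hence two such pairs with the
same projections differ by a translation by a multiple of `N`. Comparing the lifts of the cut
points `a` and `a'` in the two pairs (a cut only moves points up) shows that this translation is
both `≥ 0` and `≤ 0`.
Conversely, `(B, B')` is lifted by cutting each set where its range is minimal, aligning the two
lifts at a lift of a point of `B ∩ B'` (which exists because `B △ B' ⊊ A ⊆ B ∪ B'`), and then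
shifting so that the least lifted point over `A` becomes its own residue `a`.
-/

theorem Int.ModEq.eq_of_abs_sub_lt {n a b : ℤ} (h : a ≡ b [ZMOD n]) (hab : |b - a| < n) :
    a = b :=
  (sub_eq_zero.mp (Int.eq_zero_of_abs_lt_dvd h.dvd hab)).symm

namespace Finset

variable {α β : Type*} [DecidableEq β] {f : α → β}

theorem image_ssubset_image_of_injOn {s t u : Finset α} (hf : Set.InjOn f u) (hst : s ⊂ t)
    (htu : t ⊆ u) : s.image f ⊂ t.image f := by
  refine (image_subset_image hst.subset).ssubset_of_ne fun h => hst.ne ?_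
  exact (image_eq_image_iff_of_injOn hf (hst.subset.trans htu) htu).mp h

theorem image_sdiff_inter_of_injOn [DecidableEq α] {s t : Finset α} (hf : Set.InjOn f ↑(s ∪ t)) :
    ((s ∪ t) \ (s ∩ t)).image f = (s.image f ∪ t.image f) \ (s.image f ∩ t.image f) := by
  rw [image_sdiff_of_injOn hf inter_subset_union, image_union,
    image_inter_of_injOn s t (coe_union s t ▸ hf)]

theorem exists_mem_inter_of_sdiff_inter_ssubset [DecidableEq α] {s t u : Finset α}
    (h : (s ∪ t) \ (s ∩ t) ⊂ u) (hu : u ⊆ s ∪ t) : ∃ x ∈ u, x ∈ s ∩ t := by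
  obtain ⟨x, hxu, hx⟩ := exists_of_ssubset h
  exact ⟨x, hxu, by_contra fun hst => hx (mem_sdiff.mpr ⟨hu hxu, hst⟩)⟩

end Finset

section

open Finset

variable {N : ℤ}

theorem projN_modEq (x : ℤ) : projN N x ≡ x [ZMOD N] := by
  simpa [projN] using (Int.mod_modEq (x - 1) N).add_right 1

theorem projN_eq_projN_iff {x y : ℤ} : projN N x = projN N y ↔ x ≡ y [ZMOD N] := by
  refine ⟨fun h => (projN_modEq x).symm.trans (h ▸ projN_modEq y), fun h => ?_⟩
  unfold projN
  rw [h.sub_right 1]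

theorem projN_mem_Icc (hN : 1 ≤ N) (x : ℤ) : projN N x ∈ Icc 1 N := by
  have := Int.emod_nonneg (x - 1) (by omega : N ≠ 0)
  have := Int.emod_lt_of_pos (x - 1) (by omega : 0 < N)
  simp only [projN, mem_Icc]
  omega

theorem projN_of_mem_Icc {x : ℤ} (hx : x ∈ Icc 1 N) : projN N x = x := by
  rw [mem_Icc] at hx
  rw [projN, Int.emod_eq_of_lt (by omega) (by omega), sub_add_cancel]

theorem cutN_modEq (n i : ℤ) : cutN N n i ≡ i [ZMOD N] := by
  unfold cutN
  split_ifs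
  · rfl
  · simp [Int.ModEq]

theorem le_cutN (hN : 0 ≤ N) (n i : ℤ) : i ≤ cutN N n i := by
  unfold cutN; split_ifs <;> omega

theorem cutN_self (n : ℤ) : cutN N n n = n := if_pos le_rfl

theorem cutN_mem_Icc {n i : ℤ} (hn : n ∈ Icc 1 N) (hi : i ∈ Icc 1 N) :
    cutN N n i ∈ Icc n (n + N - 1) := by
  rw [mem_Icc] at *
  unfold cutN; split_ifs <;> omega

theorem projN_cutN {n i : ℤ} (hi : i ∈ Icc 1 N) : projN N (cutN N n i) = i :=
  (projN_eq_projN_iff.mpr (cutN_modEq n i)).trans (projN_of_mem_Icc hi)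

theorem projN_add_of_modEq_zero {k : ℤ} (hk : k ≡ 0 [ZMOD N]) (x : ℤ) :
    projN N (x + k) = projN N x :=
  projN_eq_projN_iff.mpr (by simpa using hk.add_left x)

theorem image_projN_image_cutN {A : Finset ℤ} (hA : A ⊆ Icc 1 N) (n : ℤ) :
    (A.image (cutN N n)).image (projN N) = A := by
  rw [image_image]
  exact (image_congr fun i hi => projN_cutN (hA hi)).trans image_id'

theorem image_projN_image_add {k : ℤ} (hk : k ≡ 0 [ZMOD N]) (S : Finset ℤ) :
    (S.image (· + k)).image (projN N) = S.image (projN N) := by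
  rw [image_image]
  exact image_congr fun x _ => projN_add_of_modEq_zero hk x

theorem image_cutN_image_projN {S : Finset ℤ} {m : ℤ} (hN : 1 ≤ N)
    (hS : S ⊆ Icc m (m + N - 1)) :
    (S.image (projN N)).image (cutN N (projN N m)) = S.image (· + (projN N m - m)) := by
  rw [image_image]
  refine image_congr fun x hx => ?_
  simp only [Function.comp_apply]
  have hcut := cutN_mem_Icc (projN_mem_Icc hN m) (projN_mem_Icc hN x)
  have hx := hS hx
  rw [mem_Icc] at hcut hx
  have hmod : cutN N (projN N m) (projN N x) ≡ x + (projN N m - m) [ZMOD N] :=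
    calc cutN N (projN N m) (projN N x) ≡ x [ZMOD N] := (cutN_modEq _ _).trans (projN_modEq x)
      _ ≡ x + (projN N m - m) [ZMOD N] := by
        simpa using ((projN_modEq m).sub_right m).add_left x
  exact hmod.eq_of_abs_sub_lt (abs_lt.mpr ⟨by omega, by omega⟩)

theorem rng_nonneg (S : Finset ℤ) : 0 ≤ rng S := by
  unfold rng
  split_ifs with h
  · linarith [S.min'_le _ (S.max'_mem h)]
  · rfl

theorem sub_lt_rng {S : Finset ℤ} {x y : ℤ} (hx : x ∈ S) (hy : y ∈ S) : x - y < rng S := by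
  rw [rng, dif_pos ⟨x, hx⟩]
  linarith [S.le_max' x hx, S.min'_le y hy]

theorem rng_image_add_const (S : Finset ℤ) (k : ℤ) : rng (S.image (· + k)) = rng S := by
  rcases S.eq_empty_or_nonempty with rfl | hS
  · rfl
  have hmono : Monotone (· + k) := fun _ _ h => by dsimp; omega
  rw [rng, rng, dif_pos (hS.image _), dif_pos hS, max'_image hmono, min'_image hmono]
  ring

theorem bddBelow_rng_image_cutN (B : Finset ℤ) :
    BddBelow ((fun n => rng (B.image (cutN N n))) '' Set.Icc 1 N) :=
  ⟨0, by rintro _ ⟨_, _, rfl⟩; exact rng_nonneg _⟩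

theorem rN_le_rng_image_cutN (B : Finset ℤ) {n : ℤ} (hn : n ∈ Set.Icc 1 N) :
    rN N B ≤ rng (B.image (cutN N n)) :=
  csInf_le (bddBelow_rng_image_cutN B) ⟨n, hn, rfl⟩

theorem exists_rng_image_cutN_eq_rN (hN : 1 ≤ N) (B : Finset ℤ) :
    ∃ n ∈ Set.Icc 1 N, rng (B.image (cutN N n)) = rN N B :=
  Int.csInf_mem ((Set.nonempty_Icc.mpr hN).image _) (bddBelow_rng_image_cutN B)

-- Cutting `π(C)` at the residue of `min C` recovers a translate of `C`.
theorem rN_image_projN_le (hN : 1 ≤ N) {C : Finset ℤ} (hC : rng C ≤ N) :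
    rN N (C.image (projN N)) ≤ rng C := by
  rcases C.eq_empty_or_nonempty with rfl | hne
  · simpa [rng] using rN_le_rng_image_cutN (N := N) ∅ ⟨le_rfl, hN⟩
  set m := C.min' hne
  have hwin : C ⊆ Icc m (m + N - 1) := fun x hx => by
    have := sub_lt_rng hx (C.min'_mem hne)
    rw [mem_Icc]
    exact ⟨C.min'_le x hx, by omega⟩
  have hm := projN_mem_Icc hN m
  rw [mem_Icc] at hm
  calc rN N (C.image (projN N)) ≤ rng ((C.image (projN N)).image (cutN N (projN N m))) :=
        rN_le_rng_image_cutN _ hm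
    _ = rng C := by rw [image_cutN_image_projN hN hwin, rng_image_add_const]

theorem two_mul_abs_sub_le {S : Finset ℤ} (hS : 2 * rng S ≤ N + 1) {p x : ℤ} (hp : p ∈ S)
    (hx : x ∈ S) : 2 * |x - p| ≤ N - 1 := by
  have := abs_sub_lt_iff.mpr ⟨sub_lt_rng hx hp, sub_lt_rng hp hx⟩
  omega

theorem two_mul_abs_sub_le_of_mem_union {C C' : Finset ℤ} (hC : 2 * rng C ≤ N + 1)
    (hC' : 2 * rng C' ≤ N + 1) {p x : ℤ} (hp : p ∈ C ∩ C') (hx : x ∈ C ∪ C') :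
    2 * |x - p| ≤ N - 1 := by
  rw [mem_inter] at hp
  rcases mem_union.mp hx with hx | hx
  · exact two_mul_abs_sub_le hC hp.1 hx
  · exact two_mul_abs_sub_le hC' hp.2 hx

theorem abs_sub_lt_of_two_mul_abs_le {a b : ℤ} (ha : 2 * |a| ≤ N - 1) (hb : 2 * |b| ≤ N - 1) :
    |a - b| < N := by
  have := abs_sub a b
  omega

theorem injOn_projN {U : Finset ℤ} {p : ℤ} (hU : ∀ x ∈ U, 2 * |x - p| ≤ N - 1) :
    Set.InjOn (projN N) U := fun x hx y hy h => by
  refine (projN_eq_projN_iff.mp h).eq_of_abs_sub_lt ?_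
  simpa using abs_sub_lt_of_two_mul_abs_le (hU y hy) (hU x hx)

theorem eq_image_add_of_image_projN_eq {S T : Finset ℤ} {p q : ℤ}
    (hS : ∀ x ∈ S, 2 * |x - p| ≤ N - 1) (hT : ∀ y ∈ T, 2 * |y - q| ≤ N - 1)
    (hpq : p ≡ q [ZMOD N]) (h : S.image (projN N) = T.image (projN N)) :
    T = S.image (· + (q - p)) := by
  have key : ∀ x ∈ S, ∀ y ∈ T, projN N x = projN N y → y = x + (q - p) := fun x hx y hy hxy => by
    have hmod : x - p ≡ y - q [ZMOD N] := (projN_eq_projN_iff.mp hxy).sub hpq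
    have := hmod.eq_of_abs_sub_lt (abs_sub_lt_of_two_mul_abs_le (hT y hy) (hS x hx))
    linarith
  ext y
  constructor
  · intro hy
    obtain ⟨x, hx, hxy⟩ := mem_image.mp (h ▸ mem_image_of_mem (projN N) hy)
    exact mem_image.mpr ⟨x, hx, (key x hx y hy hxy).symm⟩
  · intro hy
    obtain ⟨x, hx, rfl⟩ := mem_image.mp hy
    obtain ⟨y, hy, hyx⟩ := mem_image.mp (h.symm ▸ mem_image_of_mem (projN N) hx)
    exact key x hx y hy hyx.symm ▸ hy

theorem sub_eq_of_mem_image_add {U : Finset ℤ} (hU : Set.InjOn (projN N) U) {k x y : ℤ}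
    (hk : k ≡ 0 [ZMOD N]) (hx : x ∈ U) (hy : y ∈ U.image (· + k)) (hxy : x ≡ y [ZMOD N]) :
    y - x = k := by
  obtain ⟨z, hz, rfl⟩ := mem_image.mp hy
  have hzx : z ≡ x [ZMOD N] := by simpa using (hk.add_left z).symm.trans hxy.symm
  rw [hU hz hx (projN_eq_projN_iff.mpr hzx)]
  ring

-- The sets `𝒞` and `𝒞_N` of the statement, and the map `(C, C') ↦ (π(C), π(C'))` between them.
def liftedPairs (N : ℤ) (A : Finset ℤ) : Set (Finset ℤ × Finset ℤ) :=
  {p | 2 * rng p.1 ≤ N + 1 ∧ 2 * rng p.2 ≤ N + 1 ∧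
    ∃ a ∈ A, (p.1 ∪ p.2) \ (p.1 ∩ p.2) ⊂ A.image (cutN N a) ∧ A.image (cutN N a) ⊆ p.1 ∪ p.2}

def cyclicPairs (N : ℤ) (A : Finset ℤ) : Set (Finset ℤ × Finset ℤ) :=
  {p | p.1 ⊆ Icc 1 N ∧ p.2 ⊆ Icc 1 N ∧ 2 * rN N p.1 ≤ N + 1 ∧ 2 * rN N p.2 ≤ N + 1 ∧
    (p.1 ∪ p.2) \ (p.1 ∩ p.2) ⊂ A ∧ A ⊆ p.1 ∪ p.2}

def projPair (N : ℤ) (p : Finset ℤ × Finset ℤ) : Finset ℤ × Finset ℤ :=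
  (p.1.image (projN N), p.2.image (projN N))

theorem mapsTo_projPair (hN : 1 ≤ N) {A : Finset ℤ} (hA : A ⊆ Icc 1 N) :
    Set.MapsTo (projPair N) (liftedPairs N A) (cyclicPairs N A) := by
  rintro ⟨C, C'⟩ ⟨hC, hC', a, -, hΔ, hsub⟩
  obtain ⟨u, -, hu⟩ := exists_mem_inter_of_sdiff_inter_ssubset hΔ hsub
  have hinj := injOn_projN fun x (hx : x ∈ C ∪ C') => two_mul_abs_sub_le_of_mem_union hC hC' hu hx
  have hS := image_projN_image_cutN hA a
  have hIcc (S : Finset ℤ) : S.image (projN N) ⊆ Icc 1 N :=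
    image_subset_iff.mpr fun x _ => projN_mem_Icc hN x
  have hrN {S : Finset ℤ} (hS : 2 * rng S ≤ N + 1) : 2 * rN N (S.image (projN N)) ≤ N + 1 := by
    have := rN_image_projN_le hN (C := S) (by omega)
    omega
  refine ⟨hIcc C, hIcc C', hrN hC, hrN hC', ?_, ?_⟩ <;> dsimp only [projPair]
  · rw [← image_sdiff_inter_of_injOn hinj, ← hS]
    exact image_ssubset_image_of_injOn hinj hΔ hsub
  · rw [← image_union, ← hS]
    exact image_subset_image hsub

theorem injOn_projPair (hN : 0 ≤ N) {A : Finset ℤ} :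
    Set.InjOn (projPair N) (liftedPairs N A) := by
  rintro ⟨C, C'⟩ ⟨hC, hC', a, haA, hΔ, hsub⟩ ⟨D, D'⟩ ⟨hD, hD', a', ha'A, hΔ', hsub'⟩ h
  simp only [projPair, Prod.mk.injEq] at h
  obtain ⟨hCD, hCD'⟩ := h
  obtain ⟨u, -, hu⟩ := exists_mem_inter_of_sdiff_inter_ssubset hΔ hsub
  obtain ⟨w, -, hw⟩ := exists_mem_inter_of_sdiff_inter_ssubset hΔ' hsub'
  have hU (x) (hx : x ∈ C ∪ C') := two_mul_abs_sub_le_of_mem_union hC hC' hu hx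
  have hV (y) (hy : y ∈ D ∪ D') := two_mul_abs_sub_le_of_mem_union hD hD' hw hy
  obtain ⟨q, hq, huq⟩ : ∃ q ∈ D ∩ D', u ≡ q [ZMOD N] := by
    rw [mem_inter] at hu
    obtain ⟨y, hy, hyu⟩ := mem_image.mp (hCD ▸ mem_image_of_mem (projN N) hu.1)
    obtain ⟨y', hy', hy'u⟩ := mem_image.mp (hCD' ▸ mem_image_of_mem (projN N) hu.2)
    have hyy' : y = y' :=
      injOn_projN hV (mem_union_left _ hy) (mem_union_right _ hy') (hyu.trans hy'u.symm)
    exact ⟨y, mem_inter.mpr ⟨hy, hyy' ▸ hy'⟩, projN_eq_projN_iff.mp hyu.symm⟩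
  have hk : q - u ≡ 0 [ZMOD N] := by simpa using huq.symm.sub_right u
  have hVq (y) (hy : y ∈ D ∪ D') := two_mul_abs_sub_le_of_mem_union hD hD' hq hy
  have hD := eq_image_add_of_image_projN_eq (fun x hx => hU x (mem_union_left _ hx))
    (fun y hy => hVq y (mem_union_left _ hy)) huq hCD
  have hD' := eq_image_add_of_image_projN_eq (fun x hx => hU x (mem_union_right _ hx))
    (fun y hy => hVq y (mem_union_right _ hy)) huq hCD'
  have hUV : D ∪ D' = (C ∪ C').image (· + (q - u)) := by rw [hD, hD', image_union]
  have hinj := injOn_projN hU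
  have h₁ : cutN N a' a - a = q - u :=
    sub_eq_of_mem_image_add hinj hk (cutN_self (N := N) a ▸ hsub (mem_image_of_mem _ haA))
      (hUV ▸ hsub' (mem_image_of_mem _ haA)) (cutN_modEq a' a).symm
  have h₂ : a' - cutN N a a' = q - u :=
    sub_eq_of_mem_image_add hinj hk (hsub (mem_image_of_mem _ ha'A))
      (hUV ▸ cutN_self (N := N) a' ▸ hsub' (mem_image_of_mem _ ha'A)) (cutN_modEq a a')
  have hqu : q - u = 0 := by
    have := le_cutN hN a' a
    have := le_cutN hN a a'
    omega
  rw [hD, hD', hqu]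
  simp

theorem exists_lift (hN : 1 ≤ N) {B B' : Finset ℤ} (hB : B ⊆ Icc 1 N) (hB' : B' ⊆ Icc 1 N)
    (hrB : 2 * rN N B ≤ N + 1) (hrB' : 2 * rN N B' ≤ N + 1) {b : ℤ} (hb : b ∈ B ∩ B') :
    ∃ C C', ∃ p ∈ C ∩ C', 2 * rng C ≤ N + 1 ∧ 2 * rng C' ≤ N + 1 ∧
      C.image (projN N) = B ∧ C'.image (projN N) = B' := by
  obtain ⟨n, -, hn⟩ := exists_rng_image_cutN_eq_rN hN B
  obtain ⟨n', -, hn'⟩ := exists_rng_image_cutN_eq_rN hN B'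
  set δ := cutN N n b - cutN N n' b
  have hδ : δ ≡ 0 [ZMOD N] := by
    simpa [δ] using ((cutN_modEq (N := N) n b).trans (cutN_modEq n' b).symm).sub_right (cutN N n' b)
  rw [mem_inter] at hb
  refine ⟨B.image (cutN N n), (B'.image (cutN N n')).image (· + δ), cutN N n b,
    mem_inter.mpr ⟨mem_image_of_mem _ hb.1, mem_image.mpr ⟨cutN N n' b, mem_image_of_mem _ hb.2,
      by ring⟩⟩, hn ▸ hrB, by rwa [rng_image_add_const, hn'], image_projN_image_cutN hB n, ?_⟩
  rw [image_projN_image_add hδ, image_projN_image_cutN hB' n']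

-- Shifting so that the least point of `U` over `A` becomes its own residue `a` makes the part of
-- `U` over `A` exactly `s_a(A)`.
theorem exists_image_add_ssubset_image_cutN (hN : 1 ≤ N) {A U T : Finset ℤ} {p : ℤ}
    (hU : ∀ x ∈ U, 2 * |x - p| ≤ N - 1) (hTU : T ⊆ U) (hTA : T.image (projN N) ⊂ A)
    (hAU : A ⊆ U.image (projN N)) :
    ∃ a ∈ A, ∃ k, k ≡ 0 [ZMOD N] ∧
      T.image (· + k) ⊂ A.image (cutN N a) ∧ A.image (cutN N a) ⊆ U.image (· + k) := by
  set L := U.filter (fun x => projN N x ∈ A)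
  have hLA : L.image (projN N) = A := by
    refine (image_subset_iff.mpr fun x hx => (mem_filter.mp hx).2).antisymm fun c hc => ?_
    obtain ⟨x, hx, rfl⟩ := mem_image.mp (hAU hc)
    exact mem_image_of_mem _ (mem_filter.mpr ⟨hx, hc⟩)
  have hLne : L.Nonempty := by
    obtain ⟨c, hc, -⟩ := exists_of_ssubset hTA
    exact image_nonempty.mp ⟨c, hLA ▸ hc⟩
  set m := L.min' hLne
  have hwin : L ⊆ Icc m (m + N - 1) := fun x hx => by
    have := abs_sub_lt_of_two_mul_abs_le (hU x (filter_subset _ _ hx))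
      (hU m (filter_subset _ _ (L.min'_mem hLne)))
    rw [sub_sub_sub_cancel_right, abs_lt] at this
    exact mem_Icc.mpr ⟨L.min'_le x hx, by omega⟩
  have hcut : A.image (cutN N (projN N m)) = L.image (· + (projN N m - m)) :=
    hLA ▸ image_cutN_image_projN hN hwin
  have hTL : T ⊂ L := by
    have hTL : T ⊆ L := fun x hx => mem_filter.mpr ⟨hTU hx, hTA.subset (mem_image_of_mem _ hx)⟩
    refine hTL.ssubset_of_ne fun h => hTA.ne ?_
    rw [h, hLA]
  refine ⟨projN N m, (mem_filter.mp (L.min'_mem hLne)).2, projN N m - m, ?_, ?_, ?_⟩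
  · simpa using (projN_modEq m).sub_right m
  · rw [hcut]
    exact (image_ssubset_image (add_left_injective _)).mpr hTL
  · rw [hcut]
    exact image_subset_image (filter_subset _ _)

theorem surjOn_projPair (hN : 1 ≤ N) {A : Finset ℤ} :
    Set.SurjOn (projPair N) (liftedPairs N A) (cyclicPairs N A) := by
  rintro ⟨B, B'⟩ ⟨hB, hB', hrB, hrB', hΔ, hsub⟩
  obtain ⟨b, -, hb⟩ := exists_mem_inter_of_sdiff_inter_ssubset hΔ hsub
  obtain ⟨C, C', p, hp, hC, hC', rfl, rfl⟩ := exists_lift hN hB hB' hrB hrB' hb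
  have hU (x) (hx : x ∈ C ∪ C') := two_mul_abs_sub_le_of_mem_union hC hC' hp hx
  obtain ⟨a, haA, k, hk, hT, hS⟩ := exists_image_add_ssubset_image_cutN hN hU sdiff_subset
    (by rwa [image_sdiff_inter_of_injOn (injOn_projN hU)]) (by rwa [image_union])
  refine ⟨(C.image (· + k), C'.image (· + k)), ⟨by rwa [rng_image_add_const],
    by rwa [rng_image_add_const], a, haA, ?_, ?_⟩, ?_⟩
  · dsimp only
    rwa [← image_sdiff_inter_of_injOn (add_left_injective k).injOn]
  · rwa [← image_union]
  · simp only [projPair, image_projN_image_add hk]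

end

theorem proj_bijOn_pairs_general (N : ℤ) (hN : 1 ≤ N)
    (A : Finset ℤ) (hA : A ⊆ Finset.Icc 1 N) :
    Set.BijOn
      (fun p : Finset ℤ × Finset ℤ => (p.1.image (projN N), p.2.image (projN N)))
      {p : Finset ℤ × Finset ℤ |
        2 * rng p.1 ≤ N + 1 ∧ 2 * rng p.2 ≤ N + 1 ∧
        ∃ a ∈ A, (p.1 ∪ p.2) \ (p.1 ∩ p.2) ⊂ A.image (cutN N a) ∧
          A.image (cutN N a) ⊆ p.1 ∪ p.2}
      {p : Finset ℤ × Finset ℤ |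
        p.1 ⊆ Finset.Icc 1 N ∧ p.2 ⊆ Finset.Icc 1 N ∧
        2 * rN N p.1 ≤ N + 1 ∧ 2 * rN N p.2 ≤ N + 1 ∧
        (p.1 ∪ p.2) \ (p.1 ∩ p.2) ⊂ A ∧ A ⊆ p.1 ∪ p.2} :=
  ⟨mapsTo_projPair hN hA, injOn_projPair (by omega), surjOn_projPair hN⟩

/-- Step 2 of the proof of the locality theorem: For nonempty
`A ⊆ {1,…,N}`, the map `(C, C') ↦ (π(C), π(C'))` is a bijection from the set
`𝒞` of pairs of finite subsets of `ℤ` with `r(C), r(C') ≤ (N+1)/2` and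
`C △ C' ⊊ s_a(A) ⊆ C ∪ C'` for some `a ∈ A`, onto the set `𝒞_N` of pairs of
subsets of `{1,…,N}` with `r_N(B), r_N(B') ≤ (N+1)/2` and `B △ B' ⊊ A ⊆ B ∪ B'`. -/
theorem proj_bijOn_pairs (N : ℤ) (hN : 1 ≤ N)
    (A : Finset ℤ) (hAne : A.Nonempty) (hA : A ⊆ Finset.Icc 1 N) :
    Set.BijOn
      (fun p : Finset ℤ × Finset ℤ => (p.1.image (projN N), p.2.image (projN N)))
      {p : Finset ℤ × Finset ℤ |
        2 * rng p.1 ≤ N + 1 ∧ 2 * rng p.2 ≤ N + 1 ∧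
        ∃ a ∈ A, (p.1 ∪ p.2) \ (p.1 ∩ p.2) ⊂ A.image (cutN N a) ∧
          A.image (cutN N a) ⊆ p.1 ∪ p.2}
      {p : Finset ℤ × Finset ℤ |
        p.1 ⊆ Finset.Icc 1 N ∧ p.2 ⊆ Finset.Icc 1 N ∧
        2 * rN N p.1 ≤ N + 1 ∧ 2 * rN N p.2 ≤ N + 1 ∧
        (p.1 ∪ p.2) \ (p.1 ∩ p.2) ⊂ A ∧ A ⊆ p.1 ∪ p.2} :=
  proj_bijOn_pairs_general N hN A hA
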